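/- Let R be a ring and M a pure projective right R-module, i.e. a direct summand of a direct sum of finitely presented modules. Then the class M^{⊥₁} = {X : Ext¹_R(M, X) = 0} is closed under arbitrary direct sums. -/

import Mathlib

open CategoryTheory DirectSum

universe u

noncomputable section

/-- A module `M` is pure projective if it is a direct summand of a direct sum of
finitely presented modules. -/
def IsPureProjective (R : Type u) [Ring R] (M : Type u) [AddCommGroup M] [Module R M] :
    Prop :=
  ∃ (ι : Type u) (F : ι → ModuleCat.{u} R),
    (∀ i, Module.FinitePresentation R (F i)) ∧
    ∃ (s : ModuleCat.of R M ⟶ ModuleCat.of R (⨁ i, F i))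
      (r : ModuleCat.of R (⨁ i, F i) ⟶ ModuleCat.of R M), s ≫ r = 𝟙 _

/-- `Ext¹_R(M, X) = 0`. -/
def Ext1Vanishes (R : Type u) [Ring R] (M X : Type u) [AddCommGroup M] [Module R M]
    [AddCommGroup X] [Module R X] : Prop :=
  Subsingleton (((Ext ℤ (ModuleCat.{u} R) 1).obj
    (Opposite.op (ModuleCat.of R M))).obj (ModuleCat.of R X))

/-! Compute `Ext¹` with a projective resolution `P₂ → P₁ → P₀ → M`: `Ext¹(M, Y) = 0` iff every
map `P₁ → Y` vanishing on `P₂` extends to `P₀`. This criterion passes to products componentwise,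
so a map `φ : P₁ → ⨁ X` extends to some `ψ₀ : P₀ → ∏ X`, and modulo `⨁ X` the map `ψ₀` factors
through `M`. The projection `∏ X → ∏ X / ⨁ X` is a pure epimorphism: finitely presented modules,
hence pure projective ones, lift along it. So the factored map lifts to `l : M → ∏ X`, and
`ψ₀ - l ∘ (P₀ → M)` takes values in `⨁ X` and still extends `φ`. -/

open LinearMap

section Factorization

variable {R : Type*} [Ring R] {A B C Y : Type*} [AddCommGroup A] [Module R A]
  [AddCommGroup B] [Module R B] [AddCommGroup C] [Module R C] [AddCommGroup Y] [Module R Y]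

theorem Function.Exact.exists_comp_eq_of_comp_eq_zero {f : A →ₗ[R] B} {g : B →ₗ[R] C}
    (hfg : Function.Exact f g) (hg : Function.Surjective g) {u : B →ₗ[R] Y}
    (hu : u ∘ₗ f = 0) : ∃ v : C →ₗ[R] Y, v ∘ₗ g = u :=
  ⟨(range f).liftQ u (range_le_ker_iff.mpr hu) ∘ₗ (hfg.linearEquivOfSurjective hg).symm,
    by ext; simp⟩

theorem LinearMap.exists_comp_eq_of_range_le {i : A →ₗ[R] B} (hi : Function.Injective i)
    {u : C →ₗ[R] B} (hu : range u ≤ range i) : ∃ v : C →ₗ[R] A, i ∘ₗ v = u :=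
  ⟨(LinearEquiv.ofInjective i hi).symm ∘ₗ u.codRestrict (range i) (hu <| mem_range_self u ·),
    by ext; simp⟩

end Factorization

namespace DirectSum

variable {R : Type*} [Ring R] {ι : Type*} (X : ι → Type*) [∀ i, AddCommGroup (X i)]
  [∀ i, Module R (X i)]

theorem coeFnLinearMap_injective : Function.Injective (coeFnLinearMap R (M := X)) :=
  DFunLike.coe_injective

theorem mem_range_coeFnLinearMap_iff {v : ∀ i, X i} :
    v ∈ range (coeFnLinearMap R (M := X)) ↔ {i | v i ≠ 0}.Finite := by
  refine ⟨?_, fun hv => ?_⟩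
  · rintro ⟨x, rfl⟩
    exact DFinsupp.finite_support x
  · classical
    refine ⟨DFinsupp.mk hv.toFinset fun i => v i, funext fun i => ?_⟩
    by_cases hi : v i = 0 <;> simp [hi]

variable (R) in
open Classical in
def zeroOn (T : Set ι) : (∀ i, X i) →ₗ[R] ∀ i, X i where
  toFun v i := if i ∈ T then 0 else v i
  map_add' v w := by funext i; by_cases hi : i ∈ T <;> simp [hi]
  map_smul' c v := by funext i; by_cases hi : i ∈ T <;> simp [hi]

theorem zeroOn_eq_zero {T : Set ι} {v : ∀ i, X i} (hv : {i | v i ≠ 0} ⊆ T) :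
    zeroOn R X T v = 0 := by
  classical
  funext i
  by_cases hi : i ∈ T
  · simp [zeroOn, hi]
  · simpa [zeroOn, hi] using not_imp_comm.mp (@hv i) hi

theorem mkQ_comp_zeroOn {T : Set ι} (hT : T.Finite) :
    (range (coeFnLinearMap R (M := X))).mkQ ∘ₗ zeroOn R X T =
      (range (coeFnLinearMap R (M := X))).mkQ := by
  classical
  ext v
  refine (Submodule.Quotient.eq _).mpr ((mem_range_coeFnLinearMap_iff X).mpr (hT.subset ?_))
  intro i hi
  by_contra hiT
  simp [zeroOn, hiT] at hi

theorem exists_lift_of_finitePresentation (F : Type*) [AddCommGroup F] [Module R F]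
    [Module.FinitePresentation R F]
    (q : F →ₗ[R] (∀ i, X i) ⧸ range (coeFnLinearMap R (M := X))) :
    ∃ l : F →ₗ[R] ∀ i, X i, (range (coeFnLinearMap R (M := X))).mkQ ∘ₗ l = q := by
  -- Lift the generators; the relations then land in `⨁ i, X i`, hence in finitely many
  -- coordinates `T`, and erasing `T` kills them without changing the class modulo `⨁ i, X i`.
  obtain ⟨n, m, p, r, hp, hrp⟩ := Module.FinitePresentation.exists_fin' R F
  obtain ⟨y, hy⟩ := Module.projective_lifting_property _ (q ∘ₗ p) (Submodule.mkQ_surjective _)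
  have hfin : ∀ j, {i | y (r (Pi.single j 1)) i ≠ 0}.Finite := fun j => by
    rw [← mem_range_coeFnLinearMap_iff (R := R), ← Submodule.Quotient.mk_eq_zero]
    simpa [hrp.apply_apply_eq_zero] using congr($hy (r (Pi.single j 1)))
  set T := ⋃ j, {i | y (r (Pi.single j 1)) i ≠ 0}
  obtain ⟨l, hl⟩ := hrp.exists_comp_eq_of_comp_eq_zero hp (u := zeroOn R X T ∘ₗ y) (by
    ext j
    show zeroOn R X T (y (r (Pi.single j 1))) _ = 0
    rw [zeroOn_eq_zero (R := R) X (Set.subset_iUnion_of_subset j le_rfl)]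
    rfl)
  refine ⟨l, (LinearMap.cancel_right hp).mp ?_⟩
  rw [comp_assoc, hl, ← comp_assoc, mkQ_comp_zeroOn X (Set.finite_iUnion hfin), hy]

end DirectSum

theorem DirectSum.exists_lift_of_isPureProjective {R : Type u} [Ring R] {ι : Type*} (X : ι → Type*)
    [∀ i, AddCommGroup (X i)] [∀ i, Module R (X i)] {M : Type u} [AddCommGroup M] [Module R M]
    (hM : IsPureProjective R M)
    (q : M →ₗ[R] (∀ i, X i) ⧸ range (coeFnLinearMap R (M := X))) :
    ∃ l : M →ₗ[R] ∀ i, X i, (range (coeFnLinearMap R (M := X))).mkQ ∘ₗ l = q := by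
  classical
  obtain ⟨κ, F, hF, s, r, hsr⟩ := hM
  choose L hL using fun k =>
    have := hF k
    exists_lift_of_finitePresentation X (F k) (q ∘ₗ r.hom ∘ₗ lof R κ (fun k => F k) k)
  have hlift : (range (coeFnLinearMap R (M := X))).mkQ ∘ₗ toModule R κ _ L = q ∘ₗ r.hom :=
    linearMap_ext R fun k => by ext x; simpa [toModule_lof] using congr($(hL k) x)
  refine ⟨toModule R κ _ L ∘ₗ s.hom, ?_⟩
  rw [← comp_assoc, hlift, comp_assoc, ← ModuleCat.hom_comp, hsr, ModuleCat.hom_id, comp_id]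

section ExtendsAlong

variable {R : Type*} [Ring R] {A' A B : Type*} [AddCommGroup A'] [Module R A']
  [AddCommGroup A] [Module R A] [AddCommGroup B] [Module R B]

def ExtendsAlong (e : A' →ₗ[R] A) (f : A →ₗ[R] B) (Y : Type*) [AddCommGroup Y] [Module R Y] :
    Prop :=
  ∀ φ : A →ₗ[R] Y, φ ∘ₗ e = 0 → ∃ ψ : B →ₗ[R] Y, ψ ∘ₗ f = φ

theorem ExtendsAlong.pi {e : A' →ₗ[R] A} {f : A →ₗ[R] B} {ι : Type*} {X : ι → Type*}
    [∀ i, AddCommGroup (X i)] [∀ i, Module R (X i)] (hX : ∀ i, ExtendsAlong e f (X i)) :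
    ExtendsAlong e f (∀ i, X i) := by
  intro φ hφ
  choose ψ hψ using fun i => hX i (proj i ∘ₗ φ) (by rw [comp_assoc, hφ, comp_zero])
  exact ⟨LinearMap.pi ψ, by ext a i; exact congr($(hψ i) a)⟩

end ExtendsAlong

theorem ExtendsAlong.directSum {R : Type u} [Ring R] {A' A B : Type*} [AddCommGroup A']
    [Module R A'] [AddCommGroup A] [Module R A] [AddCommGroup B] [Module R B]
    {e : A' →ₗ[R] A} {f : A →ₗ[R] B} {ι : Type*} {X : ι → Type*}
    [∀ i, AddCommGroup (X i)] [∀ i, Module R (X i)] {M : Type u} [AddCommGroup M] [Module R M]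
    {g : B →ₗ[R] M} (hfg : Function.Exact f g) (hg : Function.Surjective g)
    (hM : IsPureProjective R M) (hX : ∀ i, ExtendsAlong e f (X i)) :
    ExtendsAlong e f (⨁ i, X i) := by
  intro φ hφ
  let Q := range (coeFnLinearMap R (M := X))
  obtain ⟨ψ₀, hψ₀⟩ :=
    ExtendsAlong.pi hX (coeFnLinearMap R ∘ₗ φ) (by rw [comp_assoc, hφ, comp_zero])
  obtain ⟨h, hh⟩ := hfg.exists_comp_eq_of_comp_eq_zero hg (u := Q.mkQ ∘ₗ ψ₀) (by
    rw [comp_assoc, hψ₀, ← comp_assoc, range_mkQ_comp, zero_comp])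
  obtain ⟨l, hl⟩ := DirectSum.exists_lift_of_isPureProjective X hM h
  obtain ⟨ψ, hψ⟩ := exists_comp_eq_of_range_le (DirectSum.coeFnLinearMap_injective X)
    (u := ψ₀ - l ∘ₗ g) (by
      rintro _ ⟨b, rfl⟩
      rw [← Submodule.Quotient.mk_eq_zero]
      simp only [LinearMap.sub_apply, LinearMap.comp_apply, Submodule.Quotient.mk_sub,
        sub_eq_zero]
      exact congr($hh b).symm.trans congr($hl (g b)).symm)
  refine ⟨ψ, ext fun a => DirectSum.coeFnLinearMap_injective (R := R) X ?_⟩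
  calc coeFnLinearMap R (ψ (f a)) = ψ₀ (f a) - l (g (f a)) := congr($hψ (f a))
    _ = coeFnLinearMap R (φ a) := by
      rw [hfg.apply_apply_eq_zero, map_zero, sub_zero]
      exact congr($hψ₀ a)

theorem ext1Vanishes_iff_extendsAlong {R : Type u} [Ring R] {M : Type u} [AddCommGroup M]
    [Module R M] (P : ProjectiveResolution (ModuleCat.of R M)) (Y : Type u) [AddCommGroup Y]
    [Module R Y] :
    Ext1Vanishes R M Y ↔ ExtendsAlong (P.complex.d 2 1).hom (P.complex.d 1 0).hom Y := by
  rw [Ext1Vanishes, ← ModuleCat.isZero_iff_subsingleton, (P.isoExt 1 _).isZero_iff,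
    ← HomologicalComplex.exactAt_iff_isZero_homology,
    HomologicalComplex.exactAt_iff' _ 0 1 2 (by simp) (by simp), ShortComplex.moduleCat_exact_iff]
  exact ModuleCat.homEquiv.forall_congr fun _ => imp_congr ModuleCat.hom_ext_iff
    (ModuleCat.homEquiv.exists_congr fun _ => ModuleCat.hom_ext_iff)

/-- If `M` is pure projective, the class `M^{⊥₁}` is closed under direct sums. -/
theorem stmt0 (R : Type u) [Ring R] (M : Type u) [AddCommGroup M] [Module R M]
    (hM : IsPureProjective R M)
    (ι : Type u) (X : ι → Type u) [∀ i, AddCommGroup (X i)] [∀ i, Module R (X i)]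
    (hX : ∀ i, Ext1Vanishes R M (X i)) :
    Ext1Vanishes R M (⨁ i, X i) := by
  let P := ProjectiveResolution.of (ModuleCat.of R M)
  have hexact : Function.Exact (P.complex.d 1 0).hom (P.π.f 0).hom :=
    (ShortComplex.ShortExact.moduleCat_exact_iff_function_exact _).mp P.exact₀
  have hsurj : Function.Surjective (P.π.f 0).hom :=
    (ModuleCat.epi_iff_surjective _).mp inferInstance
  rw [ext1Vanishes_iff_extendsAlong P]
  exact .directSum hexact hsurj hM fun i => (ext1Vanishes_iff_extendsAlong P _).mp (hX i)

end
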